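/- arXiv:2103.06346 — 6 statements merged into one kernel-verified Lean document; each statement's English description precedes it below -/
import Mathlib

section
/- Let q be a prime power and n ≥ 2. Let P·A be the subgroup of GL_n(F_q) consisting of all invertible matrices g whose last row vanishes off the diagonal, i.e., g_{n,i} = 0 for all 1 ≤ i ≤ n-1. Then the normal core of P·A in GL_n(F_q) equals the center Z of GL_n(F_q), the subgroup of nonzero scalar matrices. -/
open Matrix

/-- The last index of `Fin n`. -/
def lastIdx (n : ℕ) (hn : 0 < n) : Fin n := ⟨n - 1, by omega⟩

/-- The subgroup `P·A` of `GL_n(F)` of invertible matrices whose last row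
vanishes off the diagonal. -/
def PA (n : ℕ) (hn : 0 < n) (F : Type) [Field F] [DecidableEq F] :
    Subgroup (GL (Fin n) F) where
  carrier := {g | ∀ i : Fin n, i ≠ lastIdx n hn →
      (g : Matrix (Fin n) (Fin n) F) (lastIdx n hn) i = 0}
  one_mem' := by
    intro i hi
    exact Matrix.one_apply_ne (Ne.symm hi)
  mul_mem' := by
    intro g h hg hh i hi
    have hval : ((g * h : GL (Fin n) F) : Matrix (Fin n) (Fin n) F)
        = (g : Matrix (Fin n) (Fin n) F) * (h : Matrix (Fin n) (Fin n) F) := rfl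
    rw [Set.mem_setOf_eq] at *
    rw [hval, Matrix.mul_apply]
    refine Finset.sum_eq_zero fun k _ => ?_
    by_cases hk : k = lastIdx n hn
    · rw [hk, hh i hi, mul_zero]
    · rw [hg k hk, zero_mul]
  inv_mem' := by
    intro g hg
    rw [Set.mem_setOf_eq] at *
    have key : ∀ j : Fin n,
        (g : Matrix (Fin n) (Fin n) F) (lastIdx n hn) (lastIdx n hn) *
          ((g⁻¹ : GL (Fin n) F) : Matrix (Fin n) (Fin n) F) (lastIdx n hn) j
        = (1 : Matrix (Fin n) (Fin n) F) (lastIdx n hn) j := by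
      intro j
      have h1 : ((g : Matrix (Fin n) (Fin n) F) *
          ((g⁻¹ : GL (Fin n) F) : Matrix (Fin n) (Fin n) F))
          = (1 : Matrix (Fin n) (Fin n) F) := by
        have : ((g * g⁻¹ : GL (Fin n) F) : Matrix (Fin n) (Fin n) F)
            = (1 : Matrix (Fin n) (Fin n) F) := by rw [mul_inv_cancel]; rfl
        rw [← this]; rfl
      have h2 := congrFun (congrFun h1 (lastIdx n hn)) j
      rw [Matrix.mul_apply] at h2
      rw [Finset.sum_eq_single (lastIdx n hn)
        (fun k _ hk => by rw [hg k hk, zero_mul])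
        (by intro h; exact absurd (Finset.mem_univ _) h)] at h2
      exact h2
    have hLL : (g : Matrix (Fin n) (Fin n) F) (lastIdx n hn) (lastIdx n hn) ≠ 0 := by
      have := key (lastIdx n hn)
      rw [Matrix.one_apply_eq] at this
      exact left_ne_zero_of_mul_eq_one this
    intro i hi
    have := key i
    rw [Matrix.one_apply_ne (Ne.symm hi)] at this
    exact (mul_eq_zero.mp this).resolve_left hLL

/-- The center of `GL_n(F)`: the subgroup of nonzero scalar matrices, realized as
the range of the homomorphism `Fˣ →* GL_n(F)` sending `a` to `a • 1`. -/
def scalarCenter (n : ℕ) (F : Type) [Field F] [DecidableEq F] :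
    Subgroup (GL (Fin n) F) :=
  (Units.map (Matrix.scalar (Fin n)).toMonoidHom : Fˣ →* GL (Fin n) F).range

/-!
An element `g` of the normal core has every conjugate in `P·A`: row `l` of every conjugate
vanishes off the diagonal. Conjugating by the swap of `l` and `i` moves row `i` of `g` into
row `l`, so `g` is diagonal; conjugating by the transvection `1 + E_{li}` then leaves
`g i i - g l l` at position `(l, i)`, so `g` is scalar. Conversely the scalar matrices form a
normal subgroup contained in `P·A`.
-/

namespace Matrix

variable {ι R : Type*} [Fintype ι] [DecidableEq ι] [CommRing R]

lemma transvection_mul_mul_transvection_neg_apply (i j : ι) (c : R) (M : Matrix ι ι R) :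
    (transvection i j c * M * transvection i j (-c)) i j
      = M i j + c * (M j j - M i i) - c ^ 2 * M j i := by
  rw [mul_transvection_apply_same, transvection_mul_apply_same, transvection_mul_apply_same]
  ring

namespace GeneralLinearGroup

def ofPerm : Equiv.Perm ι →* GL ι R := (permMatrixHom (R := R)).toHomUnits

lemma ofPerm_mul_mul_inv_apply (σ : Equiv.Perm ι) (g : GL ι R) (i j : ι) :
    ((ofPerm σ * g * (ofPerm σ)⁻¹ : GL ι R) : Matrix ι ι R) i j =
      g (σ.symm i) (σ.symm j) := by
  rw [← map_inv, Units.val_mul, Units.val_mul]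
  simp only [ofPerm, MonoidHom.coe_toHomUnits, permMatrixHom_apply, inv_inv]
  simp [PEquiv.toMatrix_toPEquiv_mul, PEquiv.mul_toMatrix_toPEquiv]

def ofTransvection (t : TransvectionStruct ι R) : GL ι R :=
  ⟨t.toMatrix, t.inv.toMatrix, t.mul_inv, t.inv_mul⟩

section ConjRow

variable {g : GL ι R} {l : ι}
  (hg : ∀ b : GL ι R, ∀ k ≠ l, ((b * g * b⁻¹ : GL ι R) : Matrix ι ι R) l k = 0)
include hg

lemma apply_eq_zero_of_forall_conj_row_eq_zero {i j : ι} (hij : i ≠ j) : g i j = 0 := by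
  have hjl : Equiv.swap l i j ≠ l := by
    rwa [Ne, Equiv.swap_apply_eq_iff, Equiv.swap_apply_left, eq_comm]
  simpa [ofPerm_mul_mul_inv_apply] using hg (ofPerm (Equiv.swap l i)) _ hjl

lemma apply_self_eq_of_forall_conj_row_eq_zero (i : ι) : g i i = g l l := by
  rcases eq_or_ne i l with rfl | hil
  · rfl
  have h := hg (ofTransvection ⟨l, i, hil.symm, 1⟩) i hil
  rw [Units.val_mul, Units.val_mul] at h
  change (transvection l i (1 : R) * (g : Matrix ι ι R) * transvection l i (-1) :
    Matrix ι ι R) l i = 0 at h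
  rw [transvection_mul_mul_transvection_neg_apply,
    apply_eq_zero_of_forall_conj_row_eq_zero hg hil.symm,
    apply_eq_zero_of_forall_conj_row_eq_zero hg hil] at h
  linear_combination h

lemma mem_center_of_forall_conj_row_eq_zero : g ∈ Subgroup.center (GL ι R) := by
  refine mem_center_iff_val_mem_range_scalar.mpr ⟨g l l, ?_⟩
  ext i j
  rcases eq_or_ne i j with rfl | hij
  · simp [apply_self_eq_of_forall_conj_row_eq_zero hg]
  · simp [hij, apply_eq_zero_of_forall_conj_row_eq_zero hg hij]

end ConjRow

lemma apply_eq_zero_of_mem_center {g : GL ι R} (hg : g ∈ Subgroup.center (GL ι R)) {i j : ι}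
    (hij : i ≠ j) : g i j = 0 := by
  obtain ⟨a, ha⟩ := mem_center_iff_val_mem_range_scalar.mp hg
  simp [← ha, hij]

end GeneralLinearGroup

end Matrix

open Matrix.GeneralLinearGroup in
theorem stmt_7 (n : ℕ) (hn : 2 ≤ n) (F : Type) [Field F] [DecidableEq F] :
    (PA n (by omega) F).normalCore = scalarCenter n F := by
  rw [show scalarCenter n F = Subgroup.center _ from center_eq_range_scalar.symm]
  refine le_antisymm (fun g hg ↦ mem_center_of_forall_conj_row_eq_zero fun b ↦ hg b) ?_
  exact Subgroup.normal_le_normalCore.mpr fun g hg k hk ↦ apply_eq_zero_of_mem_center hg hk.symm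
end

section
/- Let q be a prime power and n ≥ 2 with gcd(n, q-1) = 1. Let P·A be the subgroup of GL_n(F_q) of all invertible matrices g with g_{n,i} = 0 for 1 ≤ i ≤ n-1, and for each prime ℓ dividing q - 1 let GL_n(F_q)^{ℓ^{v_ℓ(q-1)}} be the subgroup of matrices whose determinant is an ℓ^{v_ℓ(q-1)}-th power in F_q^×. Then the normal core in GL_n(F_q) of the intersection of P·A with all the subgroups GL_n(F_q)^{ℓ^{v_ℓ(q-1)}} (ℓ ranging over primes dividing q-1) is trivial; i.e., this collection of subgroups is faithful. -/
open Matrix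

/-- The subgroup `GL_n(F)^t` of invertible matrices whose determinant is a
`t`-th power in `Fˣ`. -/
def GLpow (n : ℕ) (F : Type) [Field F] [DecidableEq F] (t : ℕ) :
    Subgroup (GL (Fin n) F) :=
  Subgroup.comap (Matrix.GeneralLinearGroup.det : GL (Fin n) F →* Fˣ)
    (powMonoidHom t : Fˣ →* Fˣ).range

/-!
If `g` lies in the normal core of `P·A`, every conjugate of `g` has last row vanishing off the
diagonal. Conjugating by the permutation matrix of a transposition moves any off-diagonal entry
into the last row, so `g` is diagonal; conjugating by an elementary transvection then forces all
diagonal entries to agree, so `g = λ • 1`. Its determinant `λ ^ n` is an `ℓ^{v_ℓ(q-1)}`-th power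
for every prime `ℓ ∣ q - 1`, so no prime divides its order in `F_q^×`; hence `λ ^ n = 1`, and
`λ = 1` because `n` is prime to `q - 1`.
-/
theorem eq_one_of_forall_exists_pow_ordProj_eq {G : Type*} [Group G] [Finite G] {x : G}
    (hx : ∀ p ∈ (Nat.card G).primeFactors,
      ∃ y : G, y ^ (p ^ (Nat.card G).factorization p) = x) :
    x = 1 := by
  by_contra hx1
  obtain ⟨p, hp, hpx⟩ := Nat.exists_prime_and_dvd (mt orderOf_eq_one_iff.mp hx1)
  have hcard : Nat.card G ≠ 0 := Nat.card_pos.ne'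
  have hpG : p ∣ Nat.card G := hpx.trans (orderOf_dvd_natCard x)
  obtain ⟨y, rfl⟩ := hx p (Nat.mem_primeFactors.mpr ⟨hp, hpG, hcard⟩)
  have hcompl : (y ^ (p ^ (Nat.card G).factorization p)) ^ ordCompl[p] (Nat.card G) = 1 := by
    rw [← pow_mul, Nat.ordProj_mul_ordCompl_eq_self, pow_card_eq_one']
  exact Nat.not_dvd_ordCompl hp hcard (hpx.trans (orderOf_dvd_of_pow_eq_one hcompl))

namespace PA

variable {n : ℕ} {hn : 0 < n} {F : Type} [Field F] [DecidableEq F] {g : GL (Fin n) F}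

lemma conj_apply_lastIdx_eq_zero (hg : g ∈ (PA n hn F).normalCore) (h : GL (Fin n) F)
    {i : Fin n} (hi : i ≠ lastIdx n hn) : (h * g * h⁻¹) (lastIdx n hn) i = 0 :=
  Subgroup.normalCore_le _ ((Subgroup.normalCore_normal _).conj_mem g hg h) i hi

lemma apply_eq_zero_of_mem_normalCore (hg : g ∈ (PA n hn F).normalCore) {i k : Fin n}
    (hik : i ≠ k) : g i k = 0 := by
  set s := Equiv.swap (lastIdx n hn) i
  have hs : s k ≠ lastIdx n hn := by
    rw [Ne, Equiv.swap_apply_eq_iff, Equiv.swap_apply_left]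
    exact hik.symm
  simpa [s, PEquiv.mul_toMatrix_toPEquiv, PEquiv.toMatrix_toPEquiv_mul] using
    conj_apply_lastIdx_eq_zero hg (Units.map (permMatrixHom (R := F)) (toUnits s)) hs

lemma apply_self_eq_of_mem_normalCore (hg : g ∈ (PA n hn F).normalCore) (i : Fin n) :
    g i i = g (lastIdx n hn) (lastIdx n hn) := by
  obtain rfl | hi := eq_or_ne i (lastIdx n hn)
  · rfl
  let t : TransvectionStruct (Fin n) F := ⟨lastIdx n hn, i, hi.symm, 1⟩
  have := conj_apply_lastIdx_eq_zero hg ⟨t.toMatrix, t.inv.toMatrix, t.mul_inv, t.inv_mul⟩ hi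
  simp only [t, TransvectionStruct.toMatrix, TransvectionStruct.inv, Units.inv_mk, Units.val_mul,
    mul_transvection_apply_same, transvection_mul_apply_same, apply_eq_zero_of_mem_normalCore hg hi,
    apply_eq_zero_of_mem_normalCore hg hi.symm, one_mul, zero_add, mul_zero, add_zero,
    neg_mul] at this
  linear_combination this

lemma normalCore_le_center : (PA n hn F).normalCore ≤ Subgroup.center (GL (Fin n) F) :=
  fun g hg => GeneralLinearGroup.mem_center_iff_val_mem_range_scalar.mpr
    ⟨g (lastIdx n hn) (lastIdx n hn), by
      ext i k
      obtain rfl | hik := eq_or_ne i k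
      · simp [apply_self_eq_of_mem_normalCore hg]
      · simp [hik, apply_eq_zero_of_mem_normalCore hg hik]⟩

end PA

theorem stmt_8 (q n : ℕ) (hn : 2 ≤ n)
    (hgcd : Nat.gcd n (q - 1) = 1)
    (F : Type) [Field F] [Fintype F] [DecidableEq F] (hF : Fintype.card F = q) :
    (PA n (by omega) F ⊓
      ⨅ ℓ ∈ (q - 1).primeFactors, GLpow n F (ℓ ^ (q - 1).factorization ℓ)).normalCore
    = ⊥ := by
  refine (Subgroup.eq_bot_iff_forall _).mpr fun g hg => ?_
  have hcard : Nat.card Fˣ = q - 1 := by rw [Nat.card_units, Nat.card_eq_fintype_card, hF]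
  have hdet : GeneralLinearGroup.det g = 1 := by
    refine eq_one_of_forall_exists_pow_ordProj_eq fun p hp => ?_
    rw [hcard] at hp ⊢
    exact Subgroup.mem_iInf.mp (Subgroup.mem_iInf.mp
      (Subgroup.normalCore_le _ hg).2 p) hp
  obtain ⟨u, rfl⟩ := (GeneralLinearGroup.center_eq_range_scalar (n := Fin n)).le
    (PA.normalCore_le_center (Subgroup.normalCore_mono inf_le_left hg))
  have hu : u = 1 :=
    (Nat.Coprime.pow_left_bijective (by rwa [hcard, Nat.coprime_comm])).injective
      (by simpa using hdet)
  simp [hu]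
end

section
/- Let q be a prime power and n ≥ 2. Then p(GL_n(F_q)) ≤ ((q^n - 1)/(q - 1)) · Π_{p prime, p ∣ gcd(n, q-1)} p^{v_p(q-1)} + Σ_{p prime, p ∣ q-1, p ∤ n} p^{v_p(q-1)}. -/
/-!
Let `C` be the part of `q - 1` built from the primes not dividing `n`, and `A = (q - 1) / C`.
`GL_n(F_q)` permutes the orbits of the group `μ_C` of `C`-th roots of unity on the nonzero
vectors of `F_q^n`; there are `(q^n - 1) / C = ((q^n - 1) / (q - 1)) · A` of them. An element
acting trivially fixes every line, so it is a scalar `λ ∈ μ_C`, with determinant `λ^n`. For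
every prime `p ∣ q - 1` with `p ∤ n`, let `GL_n(F_q)` act through the determinant on the
`p^{v_p(q-1)}` cosets of `μ_{(q-1)/p^{v_p(q-1)}}` in `F_q^×`. If `λ` also acts trivially there,
the order of `λ` divides `C` but is prime to each such `p`, so `λ = 1`. The disjoint union of all
these sets is therefore a faithful `GL_n(F_q)`-set of the required size.
-/

open Matrix Equiv MulAction

/-- The minimal degree of a faithful permutation representation of `G`:
the least `m` such that `G` embeds into the symmetric group on `m` letters. -/
noncomputable def minPermDeg (G : Type*) [Group G] : ℕ :=
  sInf {m : ℕ | ∃ f : G →* Equiv.Perm (Fin m), Function.Injective f}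

theorem minPermDeg_le_natCard {G X : Type*} [Group G] [Finite X] {f : G →* Perm X}
    (hf : Function.Injective f) : minPermDeg G ≤ Nat.card X :=
  Nat.sInf_le ⟨(Perm.viaEmbeddingHom (Finite.equivFin X).toEmbedding).comp f,
    (Perm.viaEmbeddingHom_injective _).comp hf⟩

theorem minPermDeg_le_natCard_add_natCard {G X Y : Type*} [Group G] [Finite X] [Finite Y]
    (f : G →* Perm X) (f' : G →* Perm Y) (h : f.ker ⊓ f'.ker = ⊥) :
    minPermDeg G ≤ Nat.card X + Nat.card Y := by
  rw [← MonoidHom.ker_prod, MonoidHom.ker_eq_bot_iff] at h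
  rw [← Nat.card_sum]
  exact minPermDeg_le_natCard (f := (Perm.sumCongrHom X Y).comp (f.prod f'))
    (Perm.sumCongrHom_injective.comp h)

namespace MulAction

variable {G H X : Type*} [Group G] [Group H] [MulAction G X] [MulAction H X]

instance [SMulCommClass G H X] : MulAction G (orbitRel.Quotient H X) where
  smul g := Quotient.map' (g • ·) fun _ _ ⟨h, hh⟩ =>
    ⟨h, by rw [← hh]; exact (smul_comm g h _).symm⟩
  one_smul := Quotient.ind fun x => congrArg Quotient.mk'' (one_smul G x)
  mul_smul g g' := Quotient.ind fun x => congrArg Quotient.mk'' (mul_smul g g' x)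

theorem natCard_eq_natCard_orbitRel_quotient_mul [Finite X]
    (hfree : ∀ x : X, stabilizer H x = ⊥) :
    Nat.card X = Nat.card (orbitRel.Quotient H X) * Nat.card H := by
  have : Fintype (orbitRel.Quotient H X) := Fintype.ofFinite _
  have horbit (x : X) : Nat.card (orbit H x) = Nat.card H := by
    rw [Nat.card_congr (orbitEquivQuotientStabilizer H x), hfree x]
    exact Subgroup.index_bot
  rw [Nat.card_congr (selfEquivSigmaOrbits H X), Nat.card_sigma]
  simp [horbit]

theorem mem_of_toPermHom_sigma_quotient_eq_one {ι : Type*} (K : ι → Subgroup G) {g : G}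
    (hg : toPermHom G (Σ i, G ⧸ K i) g = 1) (i : ι) : g ∈ K i := by
  have h := sigma_mk_injective (DFunLike.congr_fun hg ⟨i, ((1 : G) : G ⧸ K i)⟩)
  simpa [Quotient.smul_mk, QuotientGroup.eq] using h

end MulAction

namespace Units

instance smulCommClass_nonZero {R R' M : Type*} [Monoid R] [Monoid R'] [AddCommMonoid M]
    [DistribMulAction R M] [DistribMulAction R' M] [SMulCommClass R R' M] :
    SMulCommClass Rˣ R'ˣ {x : M // x ≠ 0} where
  smul_comm a b x := Subtype.ext (smul_comm (a : R) (b : R') x.1)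

theorem stabilizer_nonZero_eq_bot {K V : Type*} [DivisionRing K] [AddCommGroup V] [Module K V]
    (S : Subgroup Kˣ) (x : {v : V // v ≠ 0}) : stabilizer S x = ⊥ := by
  refine (Subgroup.eq_bot_iff_forall _).2 fun s hs => ?_
  have hsx : ((s : Kˣ) : K) • x.1 = (1 : K) • x.1 := by
    rw [one_smul]
    exact congrArg Subtype.val hs
  exact Subtype.ext (Units.ext (smul_left_injective K x.2 hsx))

end Units

theorem eq_one_of_pow_prod_primePow_eq_one {M : Type*} [Monoid M] {x : M} {P : Finset ℕ}
    (hP : ∀ p ∈ P, p.Prime) {e k : ℕ → ℕ} (hx : x ^ ∏ p ∈ P, p ^ e p = 1)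
    (hk : ∀ p ∈ P, ¬ p ∣ k p ∧ x ^ k p = 1) : x = 1 := by
  have hcop : (orderOf x).Coprime (∏ p ∈ P, p ^ e p) :=
    Nat.Coprime.prod_right fun p hp => Nat.Coprime.pow_right _ <|
      (Nat.coprime_comm.trans (hP p hp).coprime_iff_not_dvd).2 fun hdvd =>
        (hk p hp).1 (hdvd.trans (orderOf_dvd_of_pow_eq_one (hk p hp).2))
  exact orderOf_eq_one_iff.mp (hcop.eq_one_of_dvd (orderOf_dvd_of_pow_eq_one hx))

theorem Nat.prod_ordProj_gcd_mul_prod_ordProj_not_dvd (n : ℕ) {m : ℕ} (hm : m ≠ 0) :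
    (∏ p ∈ (Nat.gcd n m).primeFactors, ordProj[p] m) *
      ∏ p ∈ m.primeFactors.filter (fun p => ¬ p ∣ n), ordProj[p] m = m := by
  have hgcd : (Nat.gcd n m).primeFactors = m.primeFactors.filter (· ∣ n) := by
    ext p
    simp only [Nat.mem_primeFactors, Finset.mem_filter, Nat.dvd_gcd_iff, ne_eq,
      Nat.gcd_eq_zero_iff, hm, and_false, not_false_eq_true]
    tauto
  rw [hgcd, Finset.prod_filter_mul_prod_filter_not]
  conv_rhs => rw [← Nat.prod_factorization_pow_eq_self hm]
  rfl

namespace FiniteField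

variable {K : Type*} [Field K] [Finite K] {d : ℕ}

theorem natCard_rootsOfUnity (hd : d ∣ Nat.card K - 1) : Nat.card (rootsOfUnity d K) = d := by
  rw [rootsOfUnity_eq_ker, IsCyclic.card_powMonoidHom_ker, Nat.card_units, Nat.gcd_eq_right hd]

theorem index_rootsOfUnity_div (hd : d ∣ Nat.card K - 1) :
    (rootsOfUnity ((Nat.card K - 1) / d) K).index = d := by
  have hK : Nat.card K - 1 ≠ 0 := by have := Finite.one_lt_card (α := K); omega
  rw [rootsOfUnity_eq_ker, IsCyclic.index_powMonoidHom_ker, Nat.card_units,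
    Nat.gcd_eq_right (Nat.div_dvd_of_dvd hd), Nat.div_div_self hd hK]

theorem natCard_sigma_quotient_rootsOfUnity_div {ι : Type*} [Fintype ι] {d : ι → ℕ}
    (hd : ∀ i, d i ∣ Nat.card K - 1) :
    Nat.card (Σ i, Kˣ ⧸ rootsOfUnity ((Nat.card K - 1) / d i) K) = ∑ i, d i := by
  rw [Nat.card_sigma]
  exact Finset.sum_congr rfl fun i _ => index_rootsOfUnity_div (hd i)

theorem natCard_orbitRel_quotient_rootsOfUnity (ι : Type*) [Fintype ι] {a : ℕ}
    (had : a * d = Nat.card K - 1) :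
    Nat.card (orbitRel.Quotient (rootsOfUnity d K) {v : ι → K // v ≠ 0}) =
      (Nat.card K ^ Fintype.card ι - 1) / (Nat.card K - 1) * a := by
  classical
  have := Fintype.ofFinite K
  have hK : 0 < Nat.card K - 1 := by have := Finite.one_lt_card (α := K); omega
  have hd : 0 < d := Nat.pos_of_ne_zero fun h0 => hK.ne' (by rw [← had, h0, mul_zero])
  have h := natCard_eq_natCard_orbitRel_quotient_mul (X := {v : ι → K // v ≠ 0})
    (Units.stabilizer_nonZero_eq_bot (rootsOfUnity d K))
  rw [natCard_rootsOfUnity (Dvd.intro_left a had), Nat.card_eq_fintype_card,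
    Fintype.card_subtype_compl, Fintype.card_subtype_eq, Fintype.card_fun,
    ← Nat.card_eq_fintype_card] at h
  obtain ⟨k, hk⟩ : Nat.card K - 1 ∣ Nat.card K ^ Fintype.card ι - 1 := by
    simpa using Nat.sub_dvd_pow_sub_pow (Nat.card K) 1 (Fintype.card ι)
  rw [hk, Nat.mul_div_cancel_left _ hK]
  exact Nat.eq_of_mul_eq_mul_right hd (by rw [← h, hk, ← had]; ring)

end FiniteField

theorem Matrix.exists_eq_scalar_of_forall_mulVec_eq_smul {ι K : Type*} [Fintype ι]
    [DecidableEq ι] [Field K] {M : Matrix ι ι K}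
    (h : ∀ v : ι → K, ∃ c : K, M *ᵥ v = c • v) :
    ∃ a : K, M = scalar ι a := by
  obtain ⟨a, ha⟩ := (Matrix.toLin' M).exists_eq_smul_id_of_forall_notLinearIndependent
    fun v => by
      by_cases hv : v = 0
      · simp [hv, linearIndependent_fin2]
      · obtain ⟨c, hc⟩ := h v
        simp [LinearIndependent.pair_iff' hv, hc]
  refine ⟨a, ?_⟩
  rw [← LinearMap.toMatrix'_toLin' M, ha, map_smul, Module.End.one_eq_id, LinearMap.toMatrix'_id,
    smul_one_eq_diagonal, scalar_apply]

namespace Matrix.GeneralLinearGroup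

variable {ι K : Type*} [Fintype ι] [DecidableEq ι] [Field K]

theorem mem_map_scalar_of_forall_smul_eq [Nonempty ι] {S : Subgroup Kˣ} {g : GL ι K}
    (hg : ∀ x : orbitRel.Quotient S {v : ι → K // v ≠ 0}, g • x = x) :
    g ∈ S.map (scalar ι) := by
  have heig (v : ι → K) (hv : v ≠ 0) : ∃ s ∈ S, g • v = (s : K) • v := by
    obtain ⟨s, hs⟩ := Quotient.exact (hg (Quotient.mk'' ⟨v, hv⟩))
    exact ⟨s, s.2, (congrArg Subtype.val hs).symm⟩
  obtain ⟨a, ha⟩ := exists_eq_scalar_of_forall_mulVec_eq_smul (M := (g : Matrix ι ι K))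
    fun v => by
      by_cases hv : v = 0
      · exact ⟨0, by simp [hv]⟩
      · obtain ⟨s, -, hs⟩ := heig v hv
        exact ⟨s, hs⟩
  obtain ⟨i⟩ := ‹Nonempty ι›
  obtain ⟨s, hs, hgs⟩ := heig (Pi.single i 1) (by simp)
  have has : a = s := by simpa [Units.smul_def, ha] using congrFun hgs i
  exact ⟨s, hs, Units.ext (by rw [coe_scalar, ← has, ha])⟩

theorem eq_one_of_forall_smul_eq_of_det_pow_eq_one {m : ℕ} (hm : m ≠ 0) {g : GL ι K}
    (h₁ : ∀ x : orbitRel.Quotient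
      (rootsOfUnity (∏ p ∈ m.primeFactors.filter (¬ · ∣ Fintype.card ι), ordProj[p] m) K)
      {v : ι → K // v ≠ 0}, g • x = x)
    (h₂ : ∀ p ∈ m.primeFactors.filter (¬ · ∣ Fintype.card ι),
      det g ^ (m / ordProj[p] m) = 1) :
    g = 1 := by
  cases isEmpty_or_nonempty ι
  · exact Subsingleton.elim _ _
  obtain ⟨s, hs, rfl⟩ := mem_map_scalar_of_forall_smul_eq h₁
  rw [det_scalar] at h₂
  have hk (p) (hp : p ∈ m.primeFactors.filter (¬ · ∣ Fintype.card ι)) :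
      ¬ p ∣ Fintype.card ι * (m / ordProj[p] m) ∧
        s ^ (Fintype.card ι * (m / ordProj[p] m)) = 1 := by
    obtain ⟨hpm, hpn⟩ := Finset.mem_filter.1 hp
    have hprime := Nat.prime_of_mem_primeFactors hpm
    exact ⟨hprime.not_dvd_mul hpn (Nat.not_dvd_ordCompl hprime hm), by rw [pow_mul, h₂ p hp]⟩
  rw [eq_one_of_pow_prod_primePow_eq_one
    (fun p hp => Nat.prime_of_mem_primeFactors (Finset.mem_filter.1 hp).1)
    ((mem_rootsOfUnity _ _).1 hs) hk, map_one]

end Matrix.GeneralLinearGroup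

theorem stmt_9_general (q n : ℕ) (F : Type) [Field F] [Fintype F] (hF : Fintype.card F = q) :
    minPermDeg (GL (Fin n) F) ≤
      ((q ^ n - 1) / (q - 1)) *
        ∏ p ∈ (Nat.gcd n (q - 1)).primeFactors, p ^ (q - 1).factorization p +
      ∑ p ∈ (q - 1).primeFactors.filter (fun p => ¬ p ∣ n),
        p ^ (q - 1).factorization p := by
  have hq : Nat.card F = q := by rw [Nat.card_eq_fintype_card, hF]
  have hm : q - 1 ≠ 0 := by have := Fintype.one_lt_card (α := F); omega
  set P := (q - 1).primeFactors.filter (fun p => ¬ p ∣ n)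
  set A := ∏ p ∈ (Nat.gcd n (q - 1)).primeFactors, ordProj[p] (q - 1)
  set C := ∏ p ∈ P, ordProj[p] (q - 1)
  have hAC : A * C = q - 1 := Nat.prod_ordProj_gcd_mul_prod_ordProj_not_dvd n hm
  let f₁ := toPermHom (GL (Fin n) F)
    (orbitRel.Quotient (rootsOfUnity C F) {v : Fin n → F // v ≠ 0})
  let f₂ := (toPermHom Fˣ
    (Σ p : P, Fˣ ⧸ rootsOfUnity ((q - 1) / ordProj[p.1] (q - 1)) F)).comp
    (GeneralLinearGroup.det : GL (Fin n) F →* Fˣ)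
  have hker : f₁.ker ⊓ f₂.ker = ⊥ := by
    refine (Subgroup.eq_bot_iff_forall _).2 fun g ⟨hg₁, hg₂⟩ => ?_
    have h₂ := mem_of_toPermHom_sigma_quotient_eq_one (g := GeneralLinearGroup.det g) _ hg₂
    have key := GeneralLinearGroup.eq_one_of_forall_smul_eq_of_det_pow_eq_one hm (g := g)
    rw [Fintype.card_fin] at key
    exact key (fun x => DFunLike.congr_fun hg₁ x)
      fun p hp => (mem_rootsOfUnity _ _).1 (h₂ ⟨p, hp⟩)
  have hcard₁ :=
    FiniteField.natCard_orbitRel_quotient_rootsOfUnity (K := F) (Fin n) (by rwa [hq])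
  have hcard₂ := FiniteField.natCard_sigma_quotient_rootsOfUnity_div (K := F)
    (d := fun p : P => ordProj[p.1] (q - 1)) fun _ => hq ▸ Nat.ordProj_dvd _ _
  rw [hq, Fintype.card_fin] at hcard₁
  rw [hq, Finset.sum_coe_sort P (fun p => ordProj[p] (q - 1))] at hcard₂
  calc minPermDeg (GL (Fin n) F) ≤ _ := minPermDeg_le_natCard_add_natCard f₁ f₂ hker
    _ = _ := by rw [hcard₁, hcard₂]

theorem stmt_9 (q n : ℕ) (hq : IsPrimePow q) (hn : 2 ≤ n)
    (F : Type) [Field F] [Fintype F] [DecidableEq F] (hF : Fintype.card F = q) :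
    minPermDeg (GL (Fin n) F) ≤
      ((q ^ n - 1) / (q - 1)) *
        ∏ p ∈ (Nat.gcd n (q - 1)).primeFactors, p ^ (q - 1).factorization p +
      ∑ p ∈ (q - 1).primeFactors.filter (fun p => ¬ p ∣ n),
        p ^ (q - 1).factorization p :=
  stmt_9_general q n F hF
end

section
/- Let q ≥ 3 be an odd prime power and write 2^r = 2^{v_2(q-1)} for the 2-adic part of q - 1. Let GH_odd be the subgroup of GL_2(F_q) consisting of all upper triangular matrices [[α, x],[0, β]] (α, β ∈ F_q^×, x ∈ F_q) whose lower-right entry β is a 2^r-th power in F_q^×. Then the normal core of GH_odd in GL_2(F_q) equals Z_{2^r}, the subgroup of scalar matrices a·I with a a 2^r-th power in F_q^×. -/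
open Matrix

/-- The subgroup `GH_odd` of `GL_2(F)`: upper triangular matrices `[[α,x],[0,β]]`
whose lower-right entry `β` is a `2^r`-th power in `Fˣ`. -/
def GHodd (F : Type) [Field F] [DecidableEq F] (r : ℕ) :
    Subgroup (GL (Fin 2) F) where
  carrier := {g | (g : Matrix (Fin 2) (Fin 2) F) 1 0 = 0 ∧
      ∃ b : Fˣ, ((b ^ 2 ^ r : Fˣ) : F) = (g : Matrix (Fin 2) (Fin 2) F) 1 1}
  one_mem' := by
    refine ⟨Matrix.one_apply_ne (by decide), 1, ?_⟩
    show ((1 ^ 2 ^ r : Fˣ) : F) = (1 : Matrix (Fin 2) (Fin 2) F) 1 1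
    rw [one_pow, Units.val_one, Matrix.one_apply_eq]
  mul_mem' := by
    rintro g h ⟨hg0, b₁, hb₁⟩ ⟨hh0, b₂, hb₂⟩
    have hval : ((g * h : GL (Fin 2) F) : Matrix (Fin 2) (Fin 2) F)
        = (g : Matrix (Fin 2) (Fin 2) F) * (h : Matrix (Fin 2) (Fin 2) F) := rfl
    constructor
    · show ((g * h : GL (Fin 2) F) : Matrix (Fin 2) (Fin 2) F) 1 0 = 0
      rw [hval, Matrix.mul_apply, Fin.sum_univ_two, hg0, hh0, zero_mul, mul_zero,
        add_zero]
    · refine ⟨b₁ * b₂, ?_⟩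
      show _ = ((g * h : GL (Fin 2) F) : Matrix (Fin 2) (Fin 2) F) 1 1
      rw [hval, Matrix.mul_apply, Fin.sum_univ_two, hg0, zero_mul, zero_add,
        mul_pow, Units.val_mul, hb₁, hb₂]
  inv_mem' := by
    rintro g ⟨hg0, b, hb⟩
    have h1 : ((g⁻¹ : GL (Fin 2) F) : Matrix (Fin 2) (Fin 2) F) *
        (g : Matrix (Fin 2) (Fin 2) F) = 1 := by
      have : ((g⁻¹ * g : GL (Fin 2) F) : Matrix (Fin 2) (Fin 2) F) = 1 := by
        rw [inv_mul_cancel]; rfl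
      rw [← this]; rfl
    have hdet : (g : Matrix (Fin 2) (Fin 2) F).det ≠ 0 :=
      ((Matrix.isUnit_iff_isUnit_det _).mp (Units.isUnit g)).ne_zero
    rw [Matrix.det_fin_two, hg0, mul_zero, sub_zero] at hdet
    have hg00 : (g : Matrix (Fin 2) (Fin 2) F) 0 0 ≠ 0 := (mul_ne_zero_iff.mp hdet).1
    have h10 := congrFun (congrFun h1 1) 0
    rw [Matrix.mul_apply, Fin.sum_univ_two, hg0, mul_zero, add_zero,
      Matrix.one_apply_ne (by decide)] at h10
    have hinv0 : ((g⁻¹ : GL (Fin 2) F) : Matrix (Fin 2) (Fin 2) F) 1 0 = 0 :=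
      (mul_eq_zero.mp h10).resolve_right hg00
    have h11 := congrFun (congrFun h1 1) 1
    rw [Matrix.mul_apply, Fin.sum_univ_two, hinv0, zero_mul, zero_add,
      Matrix.one_apply_eq] at h11
    refine ⟨hinv0, b⁻¹, ?_⟩
    rw [inv_pow, Units.val_inv_eq_inv_val, hb]
    exact (eq_inv_of_mul_eq_one_left h11).symm

/-- The scalar matrices homomorphism `Fˣ →* GL_2(F)`. -/
def scalarHom (F : Type) [Field F] [DecidableEq F] :
    Fˣ →* GL (Fin 2) F :=
  Units.map (Matrix.scalar (Fin 2)).toMonoidHom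

/-- The subgroup `Z_t` of scalar matrices `a • 1` with `a` a `t`-th power in `Fˣ`. -/
def Zpow (F : Type) [Field F] [DecidableEq F] (t : ℕ) :
    Subgroup (GL (Fin 2) F) :=
  Subgroup.map (scalarHom F) (powMonoidHom t : Fˣ →* Fˣ).range

theorem stmt_14 (q : ℕ) (hq3 : 3 ≤ q) (hodd : Odd q) (hq : IsPrimePow q)
    (F : Type) [Field F] [Fintype F] [DecidableEq F] (hF : Fintype.card F = q) :
    (GHodd F ((q - 1).factorization 2)).normalCore
      = Zpow F (2 ^ (q - 1).factorization 2) := by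
  set r := (q - 1).factorization 2 with hr
  set t := 2 ^ r with ht
  -- characteristic is odd
  have h2 : (2 : F) ≠ 0 := by
    intro h20
    have hchar : CharP F 2 := by
      constructor
      intro x
      constructor
      · intro hx
        rcases Nat.even_or_odd x with he | ho
        · exact he.two_dvd
        · exfalso
          obtain ⟨k, rfl⟩ := ho
          have : ((2 * k + 1 : ℕ) : F) = 1 := by push_cast; rw [h20]; ring
          rw [this] at hx
          exact one_ne_zero hx
      · rintro ⟨k, rfl⟩
        push_cast
        rw [h20]; ring
    obtain ⟨n, hn⟩ := FiniteField.card F 2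
    rw [hF] at hn
    have : ¬ Odd q := by
      rw [hn.2]
      simp [Nat.even_pow, n.pos.ne', Nat.not_odd_iff_even]
    exact this hodd
  apply le_antisymm
  · -- normalCore ≤ Zpow
    intro g hg
    obtain ⟨h10, b, hb⟩ : (g : Matrix (Fin 2) (Fin 2) F) 1 0 = 0 ∧
        ∃ b : Fˣ, ((b ^ t : Fˣ) : F) = (g : Matrix (Fin 2) (Fin 2) F) 1 1 :=
      (GHodd F r).normalCore_le hg
    -- conjugating elements
    have key : ∀ c : F,
        c * (g : Matrix (Fin 2) (Fin 2) F) 0 0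
          - c * c * (g : Matrix (Fin 2) (Fin 2) F) 0 1
          - c * (g : Matrix (Fin 2) (Fin 2) F) 1 1 = 0 := by
      intro c
      have hmul : (!![1,0;c,1] : Matrix (Fin 2) (Fin 2) F) * !![1,0;-c,1] = 1 := by
        rw [Matrix.mul_fin_two, Matrix.one_fin_two]; norm_num
      have hmul' : (!![1,0;-c,1] : Matrix (Fin 2) (Fin 2) F) * !![1,0;c,1] = 1 := by
        rw [Matrix.mul_fin_two, Matrix.one_fin_two]; norm_num
      set x : GL (Fin 2) F := ⟨!![1,0;c,1], !![1,0;-c,1], hmul, hmul'⟩ with hx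
      have hmem := hg x
      have h10' : ((x * g * x⁻¹ : GL (Fin 2) F) : Matrix (Fin 2) (Fin 2) F) 1 0 = 0 :=
        hmem.1
      have hval : ((x * g * x⁻¹ : GL (Fin 2) F) : Matrix (Fin 2) (Fin 2) F)
          = !![1,0;c,1] * (g : Matrix (Fin 2) (Fin 2) F) * !![1,0;-c,1] := rfl
      rw [hval] at h10'
      simp [Matrix.mul_apply, Matrix.vecMul, dotProduct, Fin.sum_univ_two, h10] at h10'
      linear_combination h10'
    have k1 := key 1
    have km1 := key (-1)
    have h01 : (g : Matrix (Fin 2) (Fin 2) F) 0 1 = 0 := by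
      have : (2 : F) * (g : Matrix (Fin 2) (Fin 2) F) 0 1 = 0 := by
        linear_combination -k1 - km1
      rcases mul_eq_zero.mp this with h | h
      · exact absurd h h2
      · exact h
    have h00 : (g : Matrix (Fin 2) (Fin 2) F) 0 0
        = (g : Matrix (Fin 2) (Fin 2) F) 1 1 := by
      linear_combination k1 + h01
    refine Subgroup.mem_map.mpr ⟨b ^ t, MonoidHom.mem_range.mpr ⟨b, rfl⟩, ?_⟩
    apply Units.ext
    show Matrix.scalar (Fin 2) ((b ^ t : Fˣ) : F) = (g : Matrix (Fin 2) (Fin 2) F)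
    ext i j
    fin_cases i <;> fin_cases j <;>
      simp [Matrix.scalar_apply, Matrix.diagonal_apply, hb, h01, h10, h00]
  · -- Zpow ≤ normalCore
    intro g hg
    obtain ⟨a, ha, rfl⟩ := Subgroup.mem_map.mp hg
    intro x
    have hcomm : x * scalarHom F a = scalarHom F a * x := by
      apply Units.ext
      show (x : Matrix (Fin 2) (Fin 2) F) * Matrix.scalar (Fin 2) (a : F)
        = Matrix.scalar (Fin 2) (a : F) * (x : Matrix (Fin 2) (Fin 2) F)
      exact Commute.eq (Matrix.scalar_commute (a : F) (fun r' => mul_comm _ _) _).symm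
    rw [hcomm, mul_inv_cancel_right]
    obtain ⟨b, rfl⟩ := MonoidHom.mem_range.mp (by exact ha)
    refine ⟨?_, b, ?_⟩
    · show Matrix.scalar (Fin 2) ((powMonoidHom t b : Fˣ) : F) 1 0 = 0
      simp [Matrix.scalar_apply, Matrix.diagonal_apply]
    · show ((b ^ t : Fˣ) : F)
        = Matrix.scalar (Fin 2) ((powMonoidHom t b : Fˣ) : F) 1 1
      simp [Matrix.scalar_apply, powMonoidHom]
end

section
/- Let q ≥ 3 be an odd prime power, write 2^r = 2^{v_2(q-1)}, and let 0 ≤ n < q - 1. Let GH(n) be the subgroup of GL_2(F_q) consisting of all products [[a^{n+1}, 0],[0, a^{-n}]] · [[b, 0],[0, b^{-1}]] · [[1, x],[0, 1]] with a ∈ F_q^×, b a 2^r-th power in F_q^×, and x ∈ F_q. Then the normal core of GH(n) in GL_2(F_q) equals Z_{2^r}, the subgroup of scalar matrices a·I with a a 2^r-th power in F_q^×. -/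
open Matrix

/-- The product `diag(a^{n+1}, a^{-n}) * diag(b, b⁻¹) * [[1,x],[0,1]]` with
`b = c^{2^r}`, in closed form. -/
lemma prodForm (F : Type) [Field F] (r n : ℕ) (a c : Fˣ) (x : F) :
    !![((a ^ (n + 1) : Fˣ) : F), 0; 0, ((a⁻¹ ^ n : Fˣ) : F)] *
      !![((c ^ 2 ^ r : Fˣ) : F), 0; 0, (((c ^ 2 ^ r)⁻¹ : Fˣ) : F)] *
      !![1, x; 0, 1] =
    !![(a : F) ^ (n + 1) * (c : F) ^ 2 ^ r,
        (a : F) ^ (n + 1) * (c : F) ^ 2 ^ r * x;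
       0, ((a : F)⁻¹) ^ n * ((c : F)⁻¹) ^ 2 ^ r] := by
  ext i j
  fin_cases i <;> fin_cases j <;>
    simp [Matrix.mul_apply, Fin.sum_univ_two, Units.val_pow_eq_pow_val,
      Units.val_inv_eq_inv_val, inv_pow]

/-- The subgroup `GH(n) = D(n) · H_odd` of `GL_2(F)`, consisting of all products
`[[a^{n+1},0],[0,a^{-n}]] · [[b,0],[0,b⁻¹]] · [[1,x],[0,1]]` with `a ∈ Fˣ`,
`b = c^{2^r}` a `2^r`-th power in `Fˣ`, and `x ∈ F`. -/
def GHn (F : Type) [Field F] [DecidableEq F] (r n : ℕ) :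
    Subgroup (GL (Fin 2) F) where
  carrier := {g | ∃ a c : Fˣ, ∃ x : F,
    (g : Matrix (Fin 2) (Fin 2) F) =
      !![((a ^ (n + 1) : Fˣ) : F), 0; 0, ((a⁻¹ ^ n : Fˣ) : F)] *
        !![((c ^ 2 ^ r : Fˣ) : F), 0; 0, (((c ^ 2 ^ r)⁻¹ : Fˣ) : F)] *
        !![1, x; 0, 1]}
  one_mem' := by
    refine ⟨1, 1, 0, ?_⟩
    rw [prodForm]
    show (1 : Matrix (Fin 2) (Fin 2) F) = _
    ext i j
    fin_cases i <;> fin_cases j <;> simp [Matrix.one_apply]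
  mul_mem' := by
    rintro g h ⟨a₁, c₁, x₁, hg⟩ ⟨a₂, c₂, x₂, hh⟩
    rw [prodForm] at hg hh
    have ha₂ : (a₂ : F) ^ (n + 1) * (c₂ : F) ^ 2 ^ r ≠ 0 :=
      mul_ne_zero (pow_ne_zero _ (Units.ne_zero a₂)) (pow_ne_zero _ (Units.ne_zero c₂))
    refine ⟨a₁ * a₂, c₁ * c₂,
      x₂ + x₁ * (((a₂ : F)⁻¹) ^ n * ((c₂ : F)⁻¹) ^ 2 ^ r) /
        ((a₂ : F) ^ (n + 1) * (c₂ : F) ^ 2 ^ r), ?_⟩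
    rw [prodForm]
    have hval : ((g * h : GL (Fin 2) F) : Matrix (Fin 2) (Fin 2) F)
        = (g : Matrix (Fin 2) (Fin 2) F) * (h : Matrix (Fin 2) (Fin 2) F) := rfl
    rw [hval, hg, hh]
    ext i j
    fin_cases i <;> fin_cases j <;>
      (try simp [Matrix.mul_apply, Fin.sum_univ_two, Units.val_mul, mul_pow, mul_inv]) <;>
      (try field_simp) <;> (try ring)
  inv_mem' := by
    rintro g ⟨a, c, x, hg⟩
    rw [prodForm] at hg
    have ha : (a : F) ≠ 0 := Units.ne_zero a
    have hc : (c : F) ≠ 0 := Units.ne_zero c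
    refine ⟨a⁻¹, c⁻¹,
      -(((a : F) ^ (n + 1) * (c : F) ^ 2 ^ r) * x *
        (((a : F)⁻¹) ^ n * ((c : F)⁻¹) ^ 2 ^ r)⁻¹), ?_⟩
    rw [prodForm]
    refine Units.inv_eq_of_mul_eq_one_right ?_
    rw [hg]
    ext i j
    fin_cases i <;> fin_cases j <;>
      (try simp [Matrix.mul_apply, Fin.sum_univ_two, Units.val_inv_eq_inv_val,
        Matrix.one_apply, inv_pow]) <;>
      (try field_simp) <;> (try ring)

lemma pow_id1 {G : Type} [CommGroup G] (d : G) (k n : ℕ) :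
    ((d ^ k) ^ 2) ^ (n + 1) * ((d ^ (2 * n + 1)) ^ k)⁻¹ = d ^ k := by
  rw [← pow_mul, ← pow_mul, ← pow_mul, mul_inv_eq_iff_eq_mul, ← pow_add]
  congr 1; ring

lemma pow_id2 {G : Type} [CommGroup G] (d : G) (k n : ℕ) :
    (((d ^ k) ^ 2) ^ n)⁻¹ * ((d ^ (2 * n + 1)) : G) ^ k = d ^ k := by
  rw [← pow_mul, ← pow_mul, ← pow_mul, inv_mul_eq_iff_eq_mul, ← pow_add]
  congr 1; ring

lemma pow_id4 {G : Type} [CommGroup G] (lam c : G) (k n : ℕ)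
    (h : lam = (lam ^ 2) ^ (n + 1) * c ^ k) : lam ^ (2 * n + 1) = (c⁻¹) ^ k := by
  have h2 : c ^ k = ((lam ^ 2) ^ (n + 1))⁻¹ * lam := by
    nth_rewrite 2 [h]
    exact (inv_mul_cancel_left _ _).symm
  rw [inv_pow, h2]
  group

lemma coprime_pow_mem {G : Type} [CommGroup G] {y c : G} {m k : ℕ} (hco : Nat.Coprime m k)
    (h : y ^ m = c ^ k) : ∃ μ : G, μ ^ k = y := by
  set s := Nat.gcdA m k
  set t := Nat.gcdB m k
  have hb : (m : ℤ) * s + (k : ℤ) * t = 1 := by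
    have h1 := Nat.gcd_eq_gcd_ab m k
    rw [Nat.Coprime.gcd_eq_one hco] at h1
    exact_mod_cast h1.symm
  refine ⟨c ^ s * y ^ t, ?_⟩
  have key : (c ^ s * y ^ t) ^ (k : ℤ) = y := by
    rw [mul_zpow, ← _root_.zpow_mul, ← _root_.zpow_mul, mul_comm s (k:ℤ), mul_comm t (k:ℤ),
      _root_.zpow_mul, _root_.zpow_mul, zpow_natCast, zpow_natCast, ← h,
      ← zpow_natCast y m, ← zpow_natCast y k, ← _root_.zpow_mul, ← _root_.zpow_mul,
      ← _root_.zpow_add, hb, zpow_one]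
  rw [← zpow_natCast, key]

lemma scalar_mem_GHn (F : Type) [Field F] [DecidableEq F] (r n : ℕ) (mu : Fˣ) :
    scalarHom F (mu ^ 2 ^ r) ∈ GHn F r n := by
  have e1 : ((mu : F)) ^ 2 ^ r =
      (((mu : F) ^ 2 ^ r) ^ 2) ^ (n + 1) * (((mu : F) ^ (2 * n + 1)) ^ 2 ^ r)⁻¹ := by
    exact_mod_cast (congrArg Units.val (pow_id1 mu (2 ^ r) n)).symm
  have e2 : ((mu : F)) ^ 2 ^ r =
      ((((mu : F) ^ 2 ^ r) ^ 2) ^ n)⁻¹ * ((mu : F) ^ (2 * n + 1)) ^ 2 ^ r := by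
    exact_mod_cast (congrArg Units.val (pow_id2 mu (2 ^ r) n)).symm
  refine ⟨(mu ^ 2 ^ r) ^ 2, (mu ^ (2 * n + 1))⁻¹, 0, ?_⟩
  rw [prodForm]
  show Matrix.scalar (Fin 2) ((mu ^ 2 ^ r : Fˣ) : F) = _
  ext i j
  fin_cases i <;> fin_cases j
  · simpa using e1
  · simp
  · simp
  · simpa using e2

theorem stmt_17 (q n : ℕ) (hq3 : 3 ≤ q) (hodd : Odd q) (hq : IsPrimePow q)
    (hn : n < q - 1)
    (F : Type) [Field F] [Fintype F] [DecidableEq F] (hF : Fintype.card F = q) :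
    (GHn F ((q - 1).factorization 2) n).normalCore
      = Zpow F (2 ^ (q - 1).factorization 2) := by
  set r := (q - 1).factorization 2 with hr
  apply le_antisymm
  · -- normalCore ≤ Zpow
    intro g hg
    obtain ⟨a, c, x, heq⟩ := (GHn F r n).normalCore_le hg
    rw [prodForm] at heq
    have h10 : (g : Matrix (Fin 2) (Fin 2) F) 1 0 = 0 := by rw [heq]; simp
    have hone : (!![0,1;1,0] : Matrix (Fin 2) (Fin 2) F) * !![0,1;1,0] = 1 := by
      ext i j
      fin_cases i <;> fin_cases j <;>
        simp [Matrix.mul_apply, Fin.sum_univ_two, Matrix.one_apply]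
    set w : GL (Fin 2) F := ⟨!![0,1;1,0], !![0,1;1,0], hone, hone⟩ with hw
    have hgw : w * g * w⁻¹ ∈ GHn F r n := hg w
    obtain ⟨a₂, c₂, x₂, heq₂⟩ := hgw
    rw [prodForm] at heq₂
    have h01 : (g : Matrix (Fin 2) (Fin 2) F) 0 1 = 0 := by
      have h' : ((w * g * w⁻¹ : GL (Fin 2) F) : Matrix (Fin 2) (Fin 2) F) 1 0 = 0 := by
        rw [heq₂]; simp
      have hwv : ((w⁻¹ : GL (Fin 2) F) : Matrix (Fin 2) (Fin 2) F) = !![0,1;1,0] := rfl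
      rw [Units.val_mul, Units.val_mul, hwv] at h'
      simpa [hw, Matrix.mul_apply, Matrix.vecMul, dotProduct,
        Fin.sum_univ_two] using h'
    have honel : (!![1,0;1,1] : Matrix (Fin 2) (Fin 2) F) * !![1,0;-1,1] = 1 := by
      ext i j
      fin_cases i <;> fin_cases j <;>
        simp [Matrix.mul_apply, Fin.sum_univ_two, Matrix.one_apply]
    have honel' : (!![1,0;-1,1] : Matrix (Fin 2) (Fin 2) F) * !![1,0;1,1] = 1 := by
      ext i j
      fin_cases i <;> fin_cases j <;>
        simp [Matrix.mul_apply, Fin.sum_univ_two, Matrix.one_apply]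
    set l : GL (Fin 2) F := ⟨!![1,0;1,1], !![1,0;-1,1], honel, honel'⟩ with hl
    have hgl : l * g * l⁻¹ ∈ GHn F r n := hg l
    obtain ⟨a₃, c₃, x₃, heq₃⟩ := hgl
    rw [prodForm] at heq₃
    have hdiag : (g : Matrix (Fin 2) (Fin 2) F) 0 0 = (g : Matrix (Fin 2) (Fin 2) F) 1 1 := by
      have h' : ((l * g * l⁻¹ : GL (Fin 2) F) : Matrix (Fin 2) (Fin 2) F) 1 0 = 0 := by
        rw [heq₃]; simp
      have hlv : ((l⁻¹ : GL (Fin 2) F) : Matrix (Fin 2) (Fin 2) F) = !![1,0;-1,1] := rfl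
      rw [Units.val_mul, Units.val_mul, hlv] at h'
      simp [hl, Matrix.mul_apply, Matrix.vecMul, dotProduct,
        Fin.sum_univ_two, h10, h01] at h'
      linear_combination h'
    set lam : Fˣ := a ^ (n + 1) * c ^ 2 ^ r with hlam
    have hv00 : (g : Matrix (Fin 2) (Fin 2) F) 0 0 = (lam : F) := by
      rw [heq]; push_cast [hlam]; simp
    have hv11 : (g : Matrix (Fin 2) (Fin 2) F) 1 1 = (((a ^ n * c ^ 2 ^ r)⁻¹ : Fˣ) : F) := by
      rw [heq]; push_cast; simp [mul_inv, inv_pow]; ring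
    have hu2 : lam = (a ^ n * c ^ 2 ^ r)⁻¹ := by
      apply Units.ext
      rw [← hv00, hdiag, hv11]
    have ha : a = lam ^ 2 := by
      rw [sq]
      nth_rw 2 [hu2]
      rw [hlam]
      group
    have hck : lam ^ (2 * n + 1) = (c⁻¹) ^ 2 ^ r :=
      pow_id4 lam c (2 ^ r) n (by rw [← ha])
    have hco : Nat.Coprime (2 * n + 1) (2 ^ r) :=
      Nat.Coprime.pow_right r (Nat.coprime_two_right.mpr ⟨n, by ring⟩)
    obtain ⟨μ, hμ⟩ := coprime_pow_mem hco hck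
    refine ⟨lam, ⟨μ, hμ⟩, ?_⟩
    apply Units.ext
    show Matrix.scalar (Fin 2) ((lam : F)) = (g : Matrix (Fin 2) (Fin 2) F)
    ext i j
    fin_cases i <;> fin_cases j <;> simp [Matrix.scalar, Matrix.diagonal_apply]
    · exact hv00.symm
    · exact h01.symm
    · exact h10.symm
    · rw [← hdiag]; exact hv00.symm
  · -- Zpow ≤ normalCore
    rintro g hgz
    obtain ⟨u, hu, rfl⟩ := hgz
    obtain ⟨μ, rfl⟩ := hu
    have hmem : ∀ b : GL (Fin 2) F, b * scalarHom F (powMonoidHom (2 ^ r) μ) * b⁻¹ ∈ GHn F r n := by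
      intro b
      have hcomm : b * scalarHom F (powMonoidHom (2 ^ r) μ) =
          scalarHom F (powMonoidHom (2 ^ r) μ) * b := by
        apply Units.ext
        show (b : Matrix (Fin 2) (Fin 2) F) * Matrix.scalar (Fin 2) (((powMonoidHom (2 ^ r) μ : Fˣ)) : F)
          = Matrix.scalar (Fin 2) (((powMonoidHom (2 ^ r) μ : Fˣ)) : F) * (b : Matrix (Fin 2) (Fin 2) F)
        exact (Matrix.scalar_commute _ (fun r' => Commute.all _ r') _).symm
      rw [hcomm, mul_inv_cancel_right]
      exact scalar_mem_GHn F r n μ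
    exact hmem
end

section
/- Let n = 2^r · m be a positive integer with m odd, and for a positive integer t set ε(t) = 1 if t is odd and ε(t) = 2 if t is even. Then the minimum of Σ_i ε(t_i)·t_i over all finite tuples (t_1, ..., t_ℓ) of positive integers satisfying lcm(2^r, t_1, ..., t_ℓ) = n equals Σ_{p odd prime, p ∣ n} p^{v_p(n)}; in particular, this minimum is attained by taking the t_i to be the odd prime-power components p^{v_p(n)} of n. -/
/-!
Write `S(N) = sumOrdProj (· ≠ 2) N = ∑ p ^ v_p(N)` over the odd primes `p ∣ N`. Since
`v_p(lcm a b) = max (v_p a) (v_p b)`, every prime-power component of `lcm a b` is one of `a` or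
of `b`, so `S` is subadditive under `lcm`; moreover `S(t) ≤ t ≤ ε(t) t`, a sum of integers `≥ 2`
being at most their product. As `S(2 ^ r) = 0`, every admissible tuple has weight at least `S(n)`.
The odd components of `n` are odd and pairwise coprime with product `m`, so their lcm with `2 ^ r`
is `n` and their weight is exactly `S(n)`.
-/

/-- The weight `ε(t)`: `1` if `t` is odd and `2` if `t` is even. -/
def epsWeight (t : ℕ) : ℕ := if Odd t then 1 else 2

open Finset

theorem Finset.sum_le_prod_of_two_le {ι : Type*} (s : Finset ι) (f : ι → ℕ)
    (hf : ∀ i ∈ s, 2 ≤ f i) : ∑ i ∈ s, f i ≤ ∏ i ∈ s, f i := by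
  classical
  induction s using Finset.induction_on with
  | empty => simp
  | insert a s ha ih =>
    rw [sum_insert ha, prod_insert ha]
    have hfa : 2 ≤ f a := hf a (mem_insert_self a s)
    have hs := ih fun i hi => hf i (mem_insert_of_mem hi)
    rcases s.eq_empty_or_nonempty with rfl | ⟨x, hx⟩
    · simp
    · have h2 : 2 ≤ ∏ i ∈ s, f i := (hf x (mem_insert_of_mem hx)).trans
        ((single_le_sum (fun _ _ => Nat.zero_le _) hx).trans hs)
      nlinarith

theorem List.foldr_lcm_map_toList {ι : Type*} (b : ℕ) (s : Finset ι) (f : ι → ℕ) :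
    (s.toList.map f).foldr Nat.lcm b = b.lcm (s.lcm f) := by
  rw [lcm_def, ← coe_toList, Multiset.map_coe]
  induction s.toList with
  | nil => simp
  | cons t l ih =>
    rw [List.map_cons, List.foldr_cons, ih, ← Multiset.cons_coe, Multiset.lcm_cons, lcm_eq_nat_lcm,
      ← Nat.lcm_assoc, Nat.lcm_comm (f t), Nat.lcm_assoc]

def sumOrdProj (P : ℕ → Prop) [DecidablePred P] (N : ℕ) : ℕ :=
  ∑ p ∈ N.primeFactors with P p, ordProj[p] N

section

variable (P : ℕ → Prop) [DecidablePred P]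

theorem sumOrdProj_le_self (N : ℕ) : sumOrdProj P N ≤ N := by
  rcases eq_or_ne N 0 with rfl | hN
  · simp [sumOrdProj]
  calc sumOrdProj P N ≤ ∑ p ∈ N.primeFactors, ordProj[p] N :=
        sum_le_sum_of_subset (filter_subset _ _)
    _ ≤ ∏ p ∈ N.primeFactors, ordProj[p] N := by
        refine sum_le_prod_of_two_le _ _ fun p hp => ?_
        have hv : N.factorization p ≠ 0 := Finsupp.mem_support_iff.1 hp
        exact (Nat.prime_of_mem_primeFactors hp).two_le.trans (Nat.le_self_pow hv p)
    _ = N := (Nat.prod_primeFactors_pow_factorization hN).symm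

theorem sum_ordProj_lcm_le_of_factorization_le {a b : ℕ} (ha : a ≠ 0) (hb : b ≠ 0) :
    ∑ p ∈ (a.lcm b).primeFactors with P p ∧ b.factorization p ≤ a.factorization p,
      ordProj[p] (a.lcm b) ≤ sumOrdProj P a := by
  have hfac : ∀ p, b.factorization p ≤ a.factorization p →
      (a.lcm b).factorization p = a.factorization p := fun p h => by
    rw [Nat.factorization_lcm ha hb, Finsupp.sup_apply, max_eq_left h]
  calc _ = ∑ p ∈ (a.lcm b).primeFactors with P p ∧ b.factorization p ≤ a.factorization p,
        ordProj[p] a := sum_congr rfl fun p hp => by rw [hfac p (mem_filter.1 hp).2.2]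
    _ ≤ sumOrdProj P a := by
        refine sum_le_sum_of_subset fun p hp => ?_
        obtain ⟨hpL, hP, hle⟩ := mem_filter.1 hp
        have hv : (a.lcm b).factorization p ≠ 0 := Finsupp.mem_support_iff.1 hpL
        exact mem_filter.2 ⟨Finsupp.mem_support_iff.2 (hfac p hle ▸ hv), hP⟩

theorem sumOrdProj_lcm_le (a b : ℕ) :
    sumOrdProj P (a.lcm b) ≤ sumOrdProj P a + sumOrdProj P b := by
  rcases eq_or_ne a 0 with rfl | ha
  · simp [sumOrdProj]
  rcases eq_or_ne b 0 with rfl | hb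
  · simp [sumOrdProj]
  rw [sumOrdProj, ← sum_filter_add_sum_filter_not _
    (fun p => b.factorization p ≤ a.factorization p), filter_filter, filter_filter]
  gcongr ?_ + ?_
  · exact sum_ordProj_lcm_le_of_factorization_le P ha hb
  · rw [Nat.lcm_comm]
    refine (sum_le_sum_of_subset (monotone_filter_right _ fun p _ h => ?_)).trans
      (sum_ordProj_lcm_le_of_factorization_le P hb ha)
    exact ⟨h.1, le_of_not_ge h.2⟩

theorem sumOrdProj_foldr_lcm_le (b : ℕ) (l : List ℕ) :
    sumOrdProj P (l.foldr Nat.lcm b) ≤ sumOrdProj P b + (l.map (sumOrdProj P)).sum := by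
  induction l with
  | nil => simp
  | cons t l ih =>
    rw [List.foldr_cons, List.map_cons, List.sum_cons]
    calc _ ≤ sumOrdProj P t + sumOrdProj P (l.foldr Nat.lcm b) := sumOrdProj_lcm_le P _ _
      _ ≤ _ := by omega

theorem sumOrdProj_mul_of_coprime {a b : ℕ} (hab : a.Coprime b) :
    sumOrdProj P (a * b) = sumOrdProj P a + sumOrdProj P b := by
  rw [sumOrdProj, hab.primeFactors_mul, filter_union,
    sum_union (disjoint_filter_filter hab.disjoint_primeFactors),
    Nat.factorization_mul_of_coprime hab]
  congr 1 <;> refine sum_congr rfl fun p hp => ?_ <;> have hp' := (mem_filter.1 hp).1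
  · have : b.factorization p = 0 :=
      Finsupp.notMem_support_iff.1 (hab.disjoint_primeFactors.notMem_of_mem_left_finset hp')
    rw [Finsupp.add_apply, this, add_zero]
  · have : a.factorization p = 0 :=
      Finsupp.notMem_support_iff.1 (hab.disjoint_primeFactors.notMem_of_mem_right_finset hp')
    rw [Finsupp.add_apply, this, zero_add]

end

theorem Nat.lcm_ordProj_primeFactors {N : ℕ} (hN : N ≠ 0) :
    N.primeFactors.lcm (fun p => ordProj[p] N) = N := by
  rw [lcm_eq_prod fun p hp q hq hpq => Nat.coprime_pow_primes _ _
    (Nat.prime_of_mem_primeFactors hp) (Nat.prime_of_mem_primeFactors hq) hpq,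
    ← Nat.prod_primeFactors_pow_factorization hN]

theorem sumOrdProj_ne_pow_self {q : ℕ} (hq : q.Prime) (r : ℕ) :
    sumOrdProj (· ≠ q) (q ^ r) = 0 := by
  rw [sumOrdProj, filter_eq_empty_iff.2 fun p hp => ?_, sum_empty]
  have hp' := Nat.prime_of_mem_primeFactors hp
  exact not_not.2 ((Nat.prime_dvd_prime_iff_eq hp' hq).1
    (hp'.dvd_of_dvd_pow (Nat.dvd_of_mem_primeFactors hp)))

theorem sumOrdProj_ne_of_not_dvd {q m : ℕ} (hqm : ¬q ∣ m) :
    sumOrdProj (· ≠ q) m = ∑ p ∈ m.primeFactors, ordProj[p] m := by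
  rw [sumOrdProj, filter_true_of_mem]
  rintro p hp rfl
  exact hqm (Nat.dvd_of_mem_primeFactors hp)

theorem le_epsWeight_mul (t : ℕ) : t ≤ epsWeight t * t :=
  Nat.le_mul_of_pos_left t (by unfold epsWeight; split <;> norm_num)

theorem epsWeight_mul_of_odd {t : ℕ} (ht : Odd t) : epsWeight t * t = t := by
  simp [epsWeight, ht]

theorem stmt_18 (r m n : ℕ) (hm : Odd m) (hn : n = 2 ^ r * m) :
    IsLeast
      {s : ℕ | ∃ l : List ℕ, (∀ t ∈ l, 0 < t) ∧
        l.foldr Nat.lcm (2 ^ r) = n ∧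
        s = (l.map fun t => epsWeight t * t).sum}
      (∑ p ∈ n.primeFactors.filter (fun p => p ≠ 2), p ^ n.factorization p) := by
  change IsLeast _ (sumOrdProj (· ≠ 2) n)
  have hcop : (2 ^ r).Coprime m := Nat.Coprime.pow_left r (Nat.coprime_two_left.2 hm)
  refine ⟨⟨m.primeFactors.toList.map fun p => ordProj[p] m, ?_, ?_, ?_⟩, ?_⟩
  · simp only [List.mem_map, mem_toList]
    rintro _ ⟨p, hp, rfl⟩
    exact pow_pos (Nat.prime_of_mem_primeFactors hp).pos _
  · rw [List.foldr_lcm_map_toList, Nat.lcm_ordProj_primeFactors hm.pos.ne', hcop.lcm_eq_mul, hn]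
  · rw [hn, sumOrdProj_mul_of_coprime _ hcop, sumOrdProj_ne_pow_self Nat.prime_two, zero_add,
      sumOrdProj_ne_of_not_dvd hm.not_two_dvd_nat, List.map_map, sum_map_toList]
    exact sum_congr rfl fun p _ => (epsWeight_mul_of_odd (hm.of_dvd_nat (Nat.ordProj_dvd m p))).symm
  · rintro s ⟨l, -, hl, rfl⟩
    calc sumOrdProj (· ≠ 2) n
        ≤ sumOrdProj (· ≠ 2) (2 ^ r) + (l.map (sumOrdProj (· ≠ 2))).sum :=
          hl ▸ sumOrdProj_foldr_lcm_le _ _ _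
      _ ≤ (l.map fun t => epsWeight t * t).sum := by
          rw [sumOrdProj_ne_pow_self Nat.prime_two, zero_add]
          exact List.sum_le_sum fun t _ => (sumOrdProj_le_self _ t).trans (le_epsWeight_mul t)
end
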